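/- Let n ≥ 1 and let ψ : [0,1]^n → ℝ be monotonic, continuous, quasiconcave, homogeneous, and translation-invariant. Then there exists a unique function ψ̃ : ℝ^n → ℝ extending ψ (i.e., ψ̃(u) = ψ(u) for all u ∈ [0,1]^n) such that ψ̃ is monotonic, continuous, quasiconcave, positively homogeneous (ψ̃(αu) = αψ̃(u) for all u ∈ ℝ^n and all α > 0), and translation-invariant (ψ̃(u + c·1) = ψ̃(u) + c for all u ∈ ℝ^n and c ∈ ℝ). -/

import Mathlib

/-!
Homogeneity and translation invariance force the extension: every `u ∈ ℝⁿ` can be written as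
`α • v + c • 1` with `v` in the cube and `α > 0`, and then necessarily `ψ̃ u = α * ψ v + c`.
This value does not depend on the representation because, for two representations, the cube
points are related by a positive homothety followed by a translation, under which `ψ` is
equivariant. On the sup-norm ball `‖u‖ < R` one representation works uniformly, namely
`v = (2R)⁻¹ • (u + R • 1)`; there `ψ̃` is an increasing affine function of `ψ` composed with an
affine map into the cube, which transports monotonicity, continuity and quasiconcavity.
-/

open Set Topology

variable {ι : Type*}

def IsHomogeneousOn (ψ : (ι → ℝ) → ℝ) (D : Set (ι → ℝ)) : Prop :=
  ∀ u ∈ D, ∀ α : ℝ, 0 < α → α • u ∈ D → ψ (α • u) = α * ψ u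

def IsTranslationInvariantOn (ψ : (ι → ℝ) → ℝ) (D : Set (ι → ℝ)) : Prop :=
  ∀ u ∈ D, ∀ c : ℝ, (u + fun _ => c) ∈ D → ψ (u + fun _ => c) = ψ u + c

section Equivariance

variable {ψ : (ι → ℝ) → ℝ} {v : ι → ℝ} {α c : ℝ}

theorem IsHomogeneousOn.apply_smul_add_const_of_le_one (hhom : IsHomogeneousOn ψ (Icc 0 1))
    (hti : IsTranslationInvariantOn ψ (Icc 0 1)) (hv : v ∈ Icc 0 1) (hα : 0 < α) (hα1 : α ≤ 1)
    (hw : (α • v + fun _ => c) ∈ Icc 0 1) : ψ (α • v + fun _ => c) = α * ψ v + c := by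
  have hαv : α • v ∈ Icc (0 : ι → ℝ) 1 :=
    (convex_Icc 0 1).smul_mem_of_zero_mem (left_mem_Icc.2 zero_le_one) hv ⟨hα.le, hα1⟩
  rw [hti _ hαv c hw, hhom v hv α hα hαv]

theorem IsHomogeneousOn.apply_smul_add_const (hhom : IsHomogeneousOn ψ (Icc 0 1))
    (hti : IsTranslationInvariantOn ψ (Icc 0 1)) (hv : v ∈ Icc 0 1) (hα : 0 < α)
    (hw : (α • v + fun _ => c) ∈ Icc 0 1) : ψ (α • v + fun _ => c) = α * ψ v + c := by
  rcases le_total α 1 with hα1 | hα1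
  · exact hhom.apply_smul_add_const_of_le_one hti hv hα hα1 hw
  · set w := α • v + fun _ => c
    have hvw : v = α⁻¹ • w + fun _ => -(α⁻¹ * c) := by
      ext i
      simp only [w, Pi.add_apply, Pi.smul_apply, smul_eq_mul]
      field_simp
      ring
    have h := hhom.apply_smul_add_const_of_le_one hti hw (inv_pos.2 hα)
      (inv_le_one_of_one_le₀ hα1) (hvw ▸ hv)
    rw [← hvw] at h
    field_simp at h ⊢
    linarith

end Equivariance

section Chart

noncomputable def toCube (R : ℝ) (u : ι → ℝ) : ι → ℝ := (2 * R)⁻¹ • (u + fun _ => R)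

theorem toCube_mem_Icc [Fintype ι] {R : ℝ} {u : ι → ℝ} (h : ‖u‖ ≤ R) :
    toCube R u ∈ Icc 0 1 := by
  have hR : 0 ≤ 2 * R := by linarith [norm_nonneg u]
  have hu : ∀ i, -R ≤ u i ∧ u i ≤ R := fun i => abs_le.1 ((norm_le_pi_norm u i).trans h)
  refine ⟨fun i => mul_nonneg (inv_nonneg.2 hR) ?_, fun i => inv_mul_le_one_of_le₀ ?_ hR⟩ <;>
    simp only [Pi.add_apply] <;> linarith [hu i]

theorem smul_toCube_add_const {R : ℝ} (hR : 0 < R) (u : ι → ℝ) :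
    ((2 * R) • toCube R u + fun _ => -R) = u := by
  ext i
  simp only [toCube, Pi.add_apply, Pi.smul_apply, smul_eq_mul]
  field_simp
  ring

theorem toCube_lt_toCube {R : ℝ} (hR : 0 < R) {u v : ι → ℝ} (h : ∀ i, v i < u i) (i : ι) :
    toCube R v i < toCube R u i := by
  simp only [toCube, Pi.smul_apply, Pi.add_apply, smul_eq_mul]
  gcongr
  exact h i

theorem toCube_smul_add_one_sub_smul (R a : ℝ) (u v : ι → ℝ) :
    toCube R (a • u + (1 - a) • v) = a • toCube R u + (1 - a) • toCube R v := by
  ext i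
  simp only [toCube, Pi.smul_apply, Pi.add_apply, smul_eq_mul]
  ring

theorem continuous_toCube (R : ℝ) : Continuous (toCube (ι := ι) R) := by
  unfold toCube
  fun_prop

end Chart

section Extension

variable [Fintype ι] {ψ : (ι → ℝ) → ℝ}

noncomputable def cubeExtension (ψ : (ι → ℝ) → ℝ) (u : ι → ℝ) : ℝ :=
  2 * (‖u‖ + 1) * ψ (toCube (‖u‖ + 1) u) - (‖u‖ + 1)

theorem exists_eq_smul_add_const (u : ι → ℝ) :
    ∃ v ∈ Icc (0 : ι → ℝ) 1, ∃ α > (0 : ℝ), ∃ c : ℝ, u = α • v + fun _ => c :=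
  have hR : (0 : ℝ) < ‖u‖ + 1 := by positivity
  ⟨toCube (‖u‖ + 1) u, toCube_mem_Icc (le_add_of_nonneg_right zero_le_one), 2 * (‖u‖ + 1),
    by positivity, -(‖u‖ + 1), (smul_toCube_add_const hR u).symm⟩

theorem cubeExtension_smul_add_const (hhom : IsHomogeneousOn ψ (Icc 0 1))
    (hti : IsTranslationInvariantOn ψ (Icc 0 1)) {v : ι → ℝ} (hv : v ∈ Icc 0 1) {α : ℝ}
    (hα : 0 < α) (c : ℝ) : cubeExtension ψ (α • v + fun _ => c) = α * ψ v + c := by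
  set u := α • v + fun _ => c
  set R := ‖u‖ + 1
  have hR : 0 < R := by positivity
  have hvu : toCube R u = (α / (2 * R)) • v + fun _ => (c + R) / (2 * R) := by
    ext i
    simp only [toCube, u, Pi.add_apply, Pi.smul_apply, smul_eq_mul]
    field_simp
    ring
  have hmem : toCube R u ∈ Icc 0 1 := toCube_mem_Icc (le_add_of_nonneg_right zero_le_one)
  rw [hvu] at hmem
  have h := hhom.apply_smul_add_const hti hv (by positivity) hmem
  change 2 * R * ψ (toCube R u) - R = _
  rw [hvu, h]
  field_simp
  ring

theorem cubeExtension_eq_of_mem (hhom : IsHomogeneousOn ψ (Icc 0 1))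
    (hti : IsTranslationInvariantOn ψ (Icc 0 1)) {u : ι → ℝ} (hu : u ∈ Icc 0 1) :
    cubeExtension ψ u = ψ u := by
  simpa [← Pi.zero_def] using cubeExtension_smul_add_const hhom hti hu one_pos 0

theorem cubeExtension_eq_toCube (hhom : IsHomogeneousOn ψ (Icc 0 1))
    (hti : IsTranslationInvariantOn ψ (Icc 0 1)) {R : ℝ} {u : ι → ℝ}
    (hu : ‖u‖ < R) : cubeExtension ψ u = 2 * R * ψ (toCube R u) - R := by
  have hR : 0 < R := (norm_nonneg u).trans_lt hu
  conv_lhs => rw [← smul_toCube_add_const hR u]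
  rw [cubeExtension_smul_add_const hhom hti (toCube_mem_Icc hu.le) (by positivity)]
  ring

theorem cubeExtension_smul (hhom : IsHomogeneousOn ψ (Icc 0 1))
    (hti : IsTranslationInvariantOn ψ (Icc 0 1)) (u : ι → ℝ) {a : ℝ}
    (ha : 0 < a) : cubeExtension ψ (a • u) = a * cubeExtension ψ u := by
  obtain ⟨v, hv, α, hα, c, rfl⟩ := exists_eq_smul_add_const u
  have hau : (a • (α • v + fun _ => c)) = (a * α) • v + fun _ => a * c := by
    ext i
    simp only [Pi.add_apply, Pi.smul_apply, smul_eq_mul]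
    ring
  rw [hau, cubeExtension_smul_add_const hhom hti hv (mul_pos ha hα),
    cubeExtension_smul_add_const hhom hti hv hα]
  ring

theorem cubeExtension_add_const (hhom : IsHomogeneousOn ψ (Icc 0 1))
    (hti : IsTranslationInvariantOn ψ (Icc 0 1)) (u : ι → ℝ) (c : ℝ) :
    cubeExtension ψ (u + fun _ => c) = cubeExtension ψ u + c := by
  obtain ⟨v, hv, α, hα, d, rfl⟩ := exists_eq_smul_add_const u
  rw [add_assoc, show ((fun _ => d) + fun _ => c : ι → ℝ) = fun _ => d + c from rfl,
    cubeExtension_smul_add_const hhom hti hv hα,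
    cubeExtension_smul_add_const hhom hti hv hα]
  ring

theorem cubeExtension_lt_cubeExtension (hhom : IsHomogeneousOn ψ (Icc 0 1))
    (hti : IsTranslationInvariantOn ψ (Icc 0 1))
    (hmono : ∀ u v : ι → ℝ, u ∈ Icc 0 1 → v ∈ Icc 0 1 → (∀ i, v i < u i) → ψ v < ψ u)
    {u v : ι → ℝ} (huv : ∀ i, v i < u i) : cubeExtension ψ v < cubeExtension ψ u := by
  set R := max ‖u‖ ‖v‖ + 1
  have hu : ‖u‖ < R := by simp only [R]; linarith [le_max_left ‖u‖ ‖v‖]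
  have hv : ‖v‖ < R := by simp only [R]; linarith [le_max_right ‖u‖ ‖v‖]
  have hR : 0 < R := (norm_nonneg u).trans_lt hu
  rw [cubeExtension_eq_toCube hhom hti hu, cubeExtension_eq_toCube hhom hti hv]
  have := hmono _ _ (toCube_mem_Icc hu.le) (toCube_mem_Icc hv.le) (toCube_lt_toCube hR huv)
  gcongr

theorem min_cubeExtension_le (hhom : IsHomogeneousOn ψ (Icc 0 1))
    (hti : IsTranslationInvariantOn ψ (Icc 0 1))
    (hqc : ∀ u v : ι → ℝ, u ∈ Icc 0 1 → v ∈ Icc 0 1 → ∀ α ∈ Icc (0 : ℝ) 1,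
      min (ψ u) (ψ v) ≤ ψ (α • u + (1 - α) • v))
    (u v : ι → ℝ) {a : ℝ} (ha : a ∈ Icc (0 : ℝ) 1) :
    min (cubeExtension ψ u) (cubeExtension ψ v) ≤ cubeExtension ψ (a • u + (1 - a) • v) := by
  set R := max ‖u‖ ‖v‖ + 1
  have hu : ‖u‖ < R := by simp only [R]; linarith [le_max_left ‖u‖ ‖v‖]
  have hv : ‖v‖ < R := by simp only [R]; linarith [le_max_right ‖u‖ ‖v‖]
  have hw : ‖a • u + (1 - a) • v‖ < R := by
    have := convex_closedBall (0 : ι → ℝ) (max ‖u‖ ‖v‖)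
      (mem_closedBall_zero_iff.2 (le_max_left ‖u‖ ‖v‖))
      (mem_closedBall_zero_iff.2 (le_max_right ‖u‖ ‖v‖)) ha.1 (sub_nonneg.2 ha.2)
      (add_sub_cancel a 1)
    exact (mem_closedBall_zero_iff.1 this).trans_lt (lt_add_one _)
  have hR : 0 < R := (norm_nonneg u).trans_lt hu
  rw [cubeExtension_eq_toCube hhom hti hu, cubeExtension_eq_toCube hhom hti hv,
    cubeExtension_eq_toCube hhom hti hw, toCube_smul_add_one_sub_smul, min_sub_sub_right,
    ← mul_min_of_nonneg _ _ (by positivity)]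
  gcongr
  exact hqc _ _ (toCube_mem_Icc hu.le) (toCube_mem_Icc hv.le) a ha

theorem continuous_cubeExtension (hhom : IsHomogeneousOn ψ (Icc 0 1))
    (hti : IsTranslationInvariantOn ψ (Icc 0 1))
    (hcont : ContinuousOn ψ (Icc 0 1)) : Continuous (cubeExtension ψ) := by
  refine continuous_iff_continuousAt.2 fun u₀ => ?_
  set R := ‖u₀‖ + 1
  have hU : {u : ι → ℝ | ‖u‖ < R} ∈ 𝓝 u₀ :=
    (isOpen_lt continuous_norm continuous_const).mem_nhds (lt_add_one ‖u₀‖)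
  have hloc : ContinuousOn (fun u => 2 * R * ψ (toCube R u) - R) {u : ι → ℝ | ‖u‖ < R} :=
    (continuousOn_const.mul (hcont.comp (continuous_toCube R).continuousOn
      fun u hu => toCube_mem_Icc (le_of_lt hu))).sub continuousOn_const
  exact (hloc.congr fun u hu => cubeExtension_eq_toCube hhom hti hu).continuousAt hU

theorem eq_cubeExtension (hhom : IsHomogeneousOn ψ (Icc 0 1))
    (hti : IsTranslationInvariantOn ψ (Icc 0 1)) {φ : (ι → ℝ) → ℝ}
    (hφψ : ∀ u ∈ Icc (0 : ι → ℝ) 1, φ u = ψ u)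
    (hφhom : ∀ (u : ι → ℝ) (α : ℝ), 0 < α → φ (α • u) = α * φ u)
    (hφti : ∀ (u : ι → ℝ) (c : ℝ), φ (u + fun _ => c) = φ u + c) : φ = cubeExtension ψ := by
  funext u
  obtain ⟨v, hv, α, hα, c, rfl⟩ := exists_eq_smul_add_const u
  rw [hφti, hφhom _ _ hα, hφψ v hv, cubeExtension_smul_add_const hhom hti hv hα]

end Extension

theorem stmt_16_general {n : ℕ} (ψ : (Fin n → ℝ) → ℝ)
    (hmono : ∀ u v : Fin n → ℝ, u ∈ Set.Icc (0 : Fin n → ℝ) 1 →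
      v ∈ Set.Icc (0 : Fin n → ℝ) 1 → (∀ i, v i < u i) → ψ v < ψ u)
    (hcont : ContinuousOn ψ (Set.Icc (0 : Fin n → ℝ) 1))
    (hqc : ∀ u v : Fin n → ℝ, u ∈ Set.Icc (0 : Fin n → ℝ) 1 →
      v ∈ Set.Icc (0 : Fin n → ℝ) 1 → ∀ α : ℝ, α ∈ Set.Icc (0 : ℝ) 1 →
      min (ψ u) (ψ v) ≤ ψ (α • u + (1 - α) • v))
    (hhom : ∀ u : Fin n → ℝ, u ∈ Set.Icc (0 : Fin n → ℝ) 1 → ∀ α : ℝ, 0 < α →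
      α • u ∈ Set.Icc (0 : Fin n → ℝ) 1 → ψ (α • u) = α * ψ u)
    (hti : ∀ u : Fin n → ℝ, u ∈ Set.Icc (0 : Fin n → ℝ) 1 → ∀ c : ℝ,
      (u + fun _ => c) ∈ Set.Icc (0 : Fin n → ℝ) 1 →
      ψ (u + fun _ => c) = ψ u + c) :
    ∃! ψt : (Fin n → ℝ) → ℝ,
      (∀ u ∈ Set.Icc (0 : Fin n → ℝ) 1, ψt u = ψ u) ∧
      (∀ u v : Fin n → ℝ, (∀ i, v i < u i) → ψt v < ψt u) ∧
      Continuous ψt ∧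
      (∀ u v : Fin n → ℝ, ∀ α : ℝ, α ∈ Set.Icc (0 : ℝ) 1 →
        min (ψt u) (ψt v) ≤ ψt (α • u + (1 - α) • v)) ∧
      (∀ u : Fin n → ℝ, ∀ α : ℝ, 0 < α → ψt (α • u) = α * ψt u) ∧
      (∀ u : Fin n → ℝ, ∀ c : ℝ, ψt (u + fun _ => c) = ψt u + c) :=
  ⟨cubeExtension ψ,
    ⟨fun _ hu => cubeExtension_eq_of_mem hhom hti hu,
      fun _ _ huv => cubeExtension_lt_cubeExtension hhom hti hmono huv,
      continuous_cubeExtension hhom hti hcont,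
      fun u v _ ha => min_cubeExtension_le hhom hti hqc u v ha,
      fun u _ ha => cubeExtension_smul hhom hti u ha,
      cubeExtension_add_const hhom hti⟩,
    fun _ ⟨hext, _, _, _, hφhom, hφti⟩ => eq_cubeExtension hhom hti hext hφhom hφti⟩

/-- Extension step at the start of the paper's proof of Theorem 1: a monotonic,
continuous, quasiconcave, homogeneous, translation-invariant function on the
unit cube extends uniquely to a function on all of `ℝ^n` with the same
properties (with homogeneity and translation invariance holding globally). -/
theorem stmt_16 {n : ℕ} (hn : 1 ≤ n) (ψ : (Fin n → ℝ) → ℝ)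
    (hmono : ∀ u v : Fin n → ℝ, u ∈ Set.Icc (0 : Fin n → ℝ) 1 →
      v ∈ Set.Icc (0 : Fin n → ℝ) 1 → (∀ i, v i < u i) → ψ v < ψ u)
    (hcont : ContinuousOn ψ (Set.Icc (0 : Fin n → ℝ) 1))
    (hqc : ∀ u v : Fin n → ℝ, u ∈ Set.Icc (0 : Fin n → ℝ) 1 →
      v ∈ Set.Icc (0 : Fin n → ℝ) 1 → ∀ α : ℝ, α ∈ Set.Icc (0 : ℝ) 1 →
      min (ψ u) (ψ v) ≤ ψ (α • u + (1 - α) • v))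
    (hhom : ∀ u : Fin n → ℝ, u ∈ Set.Icc (0 : Fin n → ℝ) 1 → ∀ α : ℝ, 0 < α →
      α • u ∈ Set.Icc (0 : Fin n → ℝ) 1 → ψ (α • u) = α * ψ u)
    (hti : ∀ u : Fin n → ℝ, u ∈ Set.Icc (0 : Fin n → ℝ) 1 → ∀ c : ℝ,
      (u + fun _ => c) ∈ Set.Icc (0 : Fin n → ℝ) 1 →
      ψ (u + fun _ => c) = ψ u + c) :
    ∃! ψt : (Fin n → ℝ) → ℝ,
      (∀ u ∈ Set.Icc (0 : Fin n → ℝ) 1, ψt u = ψ u) ∧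
      (∀ u v : Fin n → ℝ, (∀ i, v i < u i) → ψt v < ψt u) ∧
      Continuous ψt ∧
      (∀ u v : Fin n → ℝ, ∀ α : ℝ, α ∈ Set.Icc (0 : ℝ) 1 →
        min (ψt u) (ψt v) ≤ ψt (α • u + (1 - α) • v)) ∧
      (∀ u : Fin n → ℝ, ∀ α : ℝ, 0 < α → ψt (α • u) = α * ψt u) ∧
      (∀ u : Fin n → ℝ, ∀ c : ℝ, ψt (u + fun _ => c) = ψt u + c) :=
  stmt_16_general ψ hmono hcont hqc hhom hti
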